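/- Let d ≥ 4 be an integer, u_h > 0, and h(u) = 1 + u² − u^{d−1}/u_h^{d−1}. Let (a, b) ⊆ (0, ∞) with h(u) > 0 for all u ∈ (a, b), and let μ : (a, b) → (0, π) be twice continuously differentiable. Define the area-density Lagrangian L(u, m, q) = (u sin m)^{−(d−1)} √(u² q² + 1/h(u)). Then μ satisfies the Euler–Lagrange equation (d/du)[∂L/∂q (u, μ(u), μ'(u))] = ∂L/∂m (u, μ(u), μ'(u)) at every u ∈ (a, b) if and only if it satisfies, at every u ∈ (a, b), the ordinary differential equation μ'' = (d−2) h(u) u μ'³ + (μ'/u)·((d−3) − (d−1) u cot(μ) μ') − (2(d−1) cot(μ) + u² h'(u) μ') / (2 u² h(u)). -/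

import Mathlib

/-- Area-density Lagrangian for surfaces parametrized as `μ = μ(u)`:
`L(u, m, q) = (u sin m)^(−(d−1)) √(u²q² + 1/h(u))` with
`h(u) = 1 + u² − u^(d−1)/u_h^(d−1)`. -/
noncomputable def areaLagrangianMu (d : ℕ) (uh : ℝ) (u m q : ℝ) : ℝ :=
  Real.sqrt (u ^ 2 * q ^ 2 + 1 / (1 + u ^ 2 - u ^ (d - 1) / uh ^ (d - 1)))
    / (u * Real.sin m) ^ (d - 1)

lemma alg_key (D u q q2 h1 s c g p : ℝ) (hu : u ≠ 0) (hs : s ≠ 0) (hp : p ≠ 0)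
    (hg : g ≠ 0) (hw : g ^ 2 - u ^ 2 * q ^ 2 ≠ 0) :
    ((2 * u * q + u ^ 2 * q2) * (g * (u * s * p)) -
        u ^ 2 * q *
          ((2 * u * q ^ 2 + u ^ 2 * (2 * q * q2) - h1 / (1 / (g ^ 2 - u ^ 2 * q ^ 2)) ^ 2) / (2 * g) * (u * s * p)
            + g * ((D - 1) * p * (s + u * c * q)))) / (g * (u * s * p)) ^ 2
      = -(g * ((D - 1) * p * (u * c))) / (u * s * p) ^ 2
    ↔ q2 = (D - 2) * (1 / (g ^ 2 - u ^ 2 * q ^ 2)) * u * q ^ 3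
          + (q / u) * ((D - 3) - (D - 1) * u * (c / s) * q)
          - (2 * (D - 1) * (c / s) + u ^ 2 * h1 * q) / (2 * u ^ 2 * (1 / (g ^ 2 - u ^ 2 * q ^ 2))) := by
  have hC : u ^ 2 * (g ^ 2 - u ^ 2 * q ^ 2) / (g ^ 3 * (u * s * p)) ≠ 0 :=
    div_ne_zero (mul_ne_zero (pow_ne_zero _ hu) hw)
      (mul_ne_zero (pow_ne_zero _ hg) (mul_ne_zero (mul_ne_zero hu hs) hp))
  have key : ((2 * u * q + u ^ 2 * q2) * (g * (u * s * p)) -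
        u ^ 2 * q *
          ((2 * u * q ^ 2 + u ^ 2 * (2 * q * q2) - h1 / (1 / (g ^ 2 - u ^ 2 * q ^ 2)) ^ 2) / (2 * g) * (u * s * p)
            + g * ((D - 1) * p * (s + u * c * q)))) / (g * (u * s * p)) ^ 2
      - (-(g * ((D - 1) * p * (u * c))) / (u * s * p) ^ 2)
      = (u ^ 2 * (g ^ 2 - u ^ 2 * q ^ 2) / (g ^ 3 * (u * s * p))) *
        (q2 - ((D - 2) * (1 / (g ^ 2 - u ^ 2 * q ^ 2)) * u * q ^ 3
          + (q / u) * ((D - 3) - (D - 1) * u * (c / s) * q)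
          - (2 * (D - 1) * (c / s) + u ^ 2 * h1 * q) / (2 * u ^ 2 * (1 / (g ^ 2 - u ^ 2 * q ^ 2))))) := by
    field_simp
    ring
  rw [← sub_eq_zero, key, mul_eq_zero, or_iff_right hC, sub_eq_zero]

lemma hasDerivAt_hfun (d : ℕ) (hd : 4 ≤ d) (uh y : ℝ) :
    HasDerivAt (fun y : ℝ => 1 + y ^ 2 - y ^ (d - 1) / uh ^ (d - 1))
      (2 * y - ((d : ℝ) - 1) * y ^ (d - 2) / uh ^ (d - 1)) y := by
  have h1 := (hasDerivAt_pow 2 y).const_add 1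
  have h2 := (hasDerivAt_pow (d - 1) y).div_const (uh ^ (d - 1))
  have h3 := h1.sub h2
  refine h3.congr_deriv ?_
  have e1 : d - 1 - 1 = d - 2 := by omega
  have e2 : ((d - 1 : ℕ) : ℝ) = (d : ℝ) - 1 := by
    have : (1 : ℕ) ≤ d := by omega
    push_cast [this]
    ring
  rw [e1, e2]
  norm_num

lemma deriv_q_areaLagrangian (d : ℕ) (uh t m q0 : ℝ)
    (hh : 0 < 1 + t ^ 2 - t ^ (d - 1) / uh ^ (d - 1)) :
    deriv (fun q => areaLagrangianMu d uh t m q) q0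
      = t ^ 2 * (2 * q0)
          / (2 * Real.sqrt (t ^ 2 * q0 ^ 2 + 1 / (1 + t ^ 2 - t ^ (d - 1) / uh ^ (d - 1))))
          / (t * Real.sin m) ^ (d - 1) := by
  have hS : t ^ 2 * q0 ^ 2 + 1 / (1 + t ^ 2 - t ^ (d - 1) / uh ^ (d - 1)) ≠ 0 :=
    ne_of_gt (add_pos_of_nonneg_of_pos (by positivity) (one_div_pos.mpr hh))
  have h1 : HasDerivAt (fun q : ℝ => t ^ 2 * q ^ 2 + 1 / (1 + t ^ 2 - t ^ (d - 1) / uh ^ (d - 1)))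
      (t ^ 2 * (2 * q0)) q0 := by
    have := ((hasDerivAt_pow 2 q0).const_mul (t ^ 2)).add_const
      (1 / (1 + t ^ 2 - t ^ (d - 1) / uh ^ (d - 1)))
    refine this.congr_deriv ?_
    norm_num
  simp only [areaLagrangianMu]
  exact ((h1.sqrt hS).div_const _).deriv

lemma alg_key' (D u q q2 h0 h1 s c g p : ℝ) (hu : u ≠ 0) (hs : s ≠ 0) (hp : p ≠ 0)
    (hg : g ≠ 0) (hh0 : h0 ≠ 0) (hrel : g ^ 2 = u ^ 2 * q ^ 2 + 1 / h0) :
    ((2 * u * q + u ^ 2 * q2) * (g * (u * s * p)) -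
        u ^ 2 * q *
          ((2 * u * q ^ 2 + u ^ 2 * (2 * q * q2) - h1 / h0 ^ 2) / (2 * g) * (u * s * p)
            + g * ((D - 1) * p * (s + u * c * q)))) / (g * (u * s * p)) ^ 2
      = -(g * ((D - 1) * p * (u * c))) / (u * s * p) ^ 2
    ↔ q2 = (D - 2) * h0 * u * q ^ 3
          + (q / u) * ((D - 3) - (D - 1) * u * (c / s) * q)
          - (2 * (D - 1) * (c / s) + u ^ 2 * h1 * q) / (2 * u ^ 2 * h0) := by
  have hw : g ^ 2 - u ^ 2 * q ^ 2 = 1 / h0 := by rw [hrel]; ring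
  have hh0' : h0 = 1 / (g ^ 2 - u ^ 2 * q ^ 2) := by rw [hw, one_div_one_div]
  rw [hh0']
  exact alg_key D u q q2 h1 s c g p hu hs hp hg (by rw [hw]; exact one_div_ne_zero hh0)

set_option maxHeartbeats 4000000 in
/-- For a `C²` profile `μ(u)` on `(a, b) ⊆ (0, ∞)` with `h > 0` on `(a, b)` and
`μ` valued in `(0, π)`, the Euler–Lagrange equation of the area-density
Lagrangian holds at every `u ∈ (a, b)` if and only if `μ` satisfies the ODE
`μ'' = (d−2)h(u)uμ'³ + (μ'/u)((d−3) − (d−1)u cot(μ)μ')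
       − (2(d−1)cot(μ) + u²h'(u)μ')/(2u²h(u))`. -/
theorem euler_lagrange_mu_of_u (d : ℕ) (hd : 4 ≤ d) (uh : ℝ) (huh : 0 < uh)
    (a b : ℝ) (hab : a < b) (ha : 0 < a)
    (hhpos : ∀ u ∈ Set.Ioo a b, 0 < 1 + u ^ 2 - u ^ (d - 1) / uh ^ (d - 1))
    (μ : ℝ → ℝ) (hμ : ContDiffOn ℝ 2 μ (Set.Ioo a b))
    (hrange : ∀ u ∈ Set.Ioo a b, μ u ∈ Set.Ioo 0 Real.pi) :
    (∀ u ∈ Set.Ioo a b,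
        deriv (fun t => deriv (fun q => areaLagrangianMu d uh t (μ t) q) (deriv μ t)) u
          = deriv (fun m => areaLagrangianMu d uh u m (deriv μ u)) (μ u)) ↔
    (∀ u ∈ Set.Ioo a b,
        deriv (deriv μ) u =
          ((d : ℝ) - 2) * (1 + u ^ 2 - u ^ (d - 1) / uh ^ (d - 1)) * u * (deriv μ u) ^ 3
          + (deriv μ u / u)
            * (((d : ℝ) - 3) - ((d : ℝ) - 1) * u * Real.cot (μ u) * deriv μ u)
          - (2 * ((d : ℝ) - 1) * Real.cot (μ u)
              + u ^ 2 * deriv (fun y : ℝ => 1 + y ^ 2 - y ^ (d - 1) / uh ^ (d - 1)) u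
                * deriv μ u)
            / (2 * u ^ 2 * (1 + u ^ 2 - u ^ (d - 1) / uh ^ (d - 1)))) := by
  have key : ∀ u ∈ Set.Ioo a b,
      (deriv (fun t => deriv (fun q => areaLagrangianMu d uh t (μ t) q) (deriv μ t)) u
          = deriv (fun m => areaLagrangianMu d uh u m (deriv μ u)) (μ u)) ↔
      (deriv (deriv μ) u =
          ((d : ℝ) - 2) * (1 + u ^ 2 - u ^ (d - 1) / uh ^ (d - 1)) * u * (deriv μ u) ^ 3
          + (deriv μ u / u)
            * (((d : ℝ) - 3) - ((d : ℝ) - 1) * u * Real.cot (μ u) * deriv μ u)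
          - (2 * ((d : ℝ) - 1) * Real.cot (μ u)
              + u ^ 2 * deriv (fun y : ℝ => 1 + y ^ 2 - y ^ (d - 1) / uh ^ (d - 1)) u
                * deriv μ u)
            / (2 * u ^ 2 * (1 + u ^ 2 - u ^ (d - 1) / uh ^ (d - 1)))) := by
    intro u hu
    have hupos : 0 < u := ha.trans hu.1
    have hu0 : u ≠ 0 := ne_of_gt hupos
    have hmem : Set.Ioo a b ∈ nhds u := isOpen_Ioo.mem_nhds hu
    have hmu := hrange u hu
    have hspos : 0 < Real.sin (μ u) := Real.sin_pos_of_pos_of_lt_pi hmu.1 hmu.2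
    have hsne : Real.sin (μ u) ≠ 0 := ne_of_gt hspos
    have hh0pos : 0 < 1 + u ^ 2 - u ^ (d - 1) / uh ^ (d - 1) := hhpos u hu
    have hh0ne : 1 + u ^ 2 - u ^ (d - 1) / uh ^ (d - 1) ≠ 0 := ne_of_gt hh0pos
    have hSpos : 0 < u ^ 2 * (deriv μ u) ^ 2 + 1 / (1 + u ^ 2 - u ^ (d - 1) / uh ^ (d - 1)) :=
      add_pos_of_nonneg_of_pos (by positivity) (one_div_pos.mpr hh0pos)
    have hgpos : 0 < Real.sqrt (u ^ 2 * (deriv μ u) ^ 2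
        + 1 / (1 + u ^ 2 - u ^ (d - 1) / uh ^ (d - 1))) := Real.sqrt_pos.mpr hSpos
    have hgne := ne_of_gt hgpos
    have hg2 : (Real.sqrt (u ^ 2 * (deriv μ u) ^ 2
          + 1 / (1 + u ^ 2 - u ^ (d - 1) / uh ^ (d - 1)))) ^ 2
        = u ^ 2 * (deriv μ u) ^ 2 + 1 / (1 + u ^ 2 - u ^ (d - 1) / uh ^ (d - 1)) :=
      Real.sq_sqrt hSpos.le
    have hpne : (u * Real.sin (μ u)) ^ (d - 2) ≠ 0 :=
      pow_ne_zero _ (mul_ne_zero hu0 hsne)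
    have hKne : (u * Real.sin (μ u)) ^ (d - 1) ≠ 0 :=
      pow_ne_zero _ (mul_ne_zero hu0 hsne)
    have e1 : d - 1 - 1 = d - 2 := by omega
    have e2 : ((d - 1 : ℕ) : ℝ) = (d : ℝ) - 1 := by
      have : (1 : ℕ) ≤ d := by omega
      push_cast [this]; ring
    have hpowus : (u * Real.sin (μ u)) ^ (d - 1)
        = u * Real.sin (μ u) * (u * Real.sin (μ u)) ^ (d - 2) := by
      rw [show d - 1 = (d - 2) + 1 by omega, pow_succ]; ring
    -- differentiability facts
    have hμd : HasDerivAt μ (deriv μ u) u :=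
      ((hμ.differentiableOn two_ne_zero).differentiableAt hmem).hasDerivAt
    have hc1 : ContDiffOn ℝ 1 (deriv μ) (Set.Ioo a b) :=
      hμ.deriv_of_isOpen isOpen_Ioo (by norm_num)
    have hq2d : HasDerivAt (deriv μ) (deriv (deriv μ) u) u :=
      ((hc1.differentiableOn one_ne_zero).differentiableAt hmem).hasDerivAt
    -- the M-side derivative
    have hbase : HasDerivAt (fun m' : ℝ => (u * Real.sin m') ^ (d - 1))
        (↑(d - 1) * (u * Real.sin (μ u)) ^ (d - 1 - 1) * (u * Real.cos (μ u))) (μ u) :=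
      ((Real.hasDerivAt_sin (μ u)).const_mul u).pow (d - 1)
    have hMd := (hasDerivAt_const (μ u)
        (Real.sqrt (u ^ 2 * (deriv μ u) ^ 2
          + 1 / (1 + u ^ 2 - u ^ (d - 1) / uh ^ (d - 1))))).div hbase hKne
    have eM : deriv (fun m => areaLagrangianMu d uh u m (deriv μ u)) (μ u)
        = -(Real.sqrt (u ^ 2 * (deriv μ u) ^ 2
              + 1 / (1 + u ^ 2 - u ^ (d - 1) / uh ^ (d - 1)))
            * (((d : ℝ) - 1) * (u * Real.sin (μ u)) ^ (d - 2) * (u * Real.cos (μ u))))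
          / (u * Real.sin (μ u) * (u * Real.sin (μ u)) ^ (d - 2)) ^ 2 := by
      simp only [areaLagrangianMu]
      rw [HasDerivAt.deriv (f := fun m => Real.sqrt (u ^ 2 * (deriv μ u) ^ 2 + 1 / (1 + u ^ 2 - u ^ (d - 1) / uh ^ (d - 1))) / (u * Real.sin m) ^ (d - 1)) hMd, e1, e2, hpowus]
      ring
    -- the inner-q derivative as a function of t, near u
    have hEq : (fun t => deriv (fun q => areaLagrangianMu d uh t (μ t) q) (deriv μ t))
        =ᶠ[nhds u] (fun t => t ^ 2 * (2 * deriv μ t)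
            / (2 * Real.sqrt (t ^ 2 * (deriv μ t) ^ 2
                + 1 / (1 + t ^ 2 - t ^ (d - 1) / uh ^ (d - 1))))
            / (t * Real.sin (μ t)) ^ (d - 1)) := by
      filter_upwards [hmem] with t ht
      exact deriv_q_areaLagrangian d uh t (μ t) (deriv μ t) (hhpos t ht)
    -- derivative of F at u
    have hNd : HasDerivAt (fun t => t ^ 2 * (2 * deriv μ t))
        (↑2 * u ^ 1 * (2 * deriv μ u) + u ^ 2 * (2 * deriv (deriv μ) u)) u :=
      (hasDerivAt_pow 2 u).mul (hq2d.const_mul 2)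
    have hhd : HasDerivAt (fun t : ℝ => 1 + t ^ 2 - t ^ (d - 1) / uh ^ (d - 1))
        (2 * u - ((d : ℝ) - 1) * u ^ (d - 2) / uh ^ (d - 1)) u := hasDerivAt_hfun d hd uh u
    have hinv : HasDerivAt (fun t : ℝ => 1 / (1 + t ^ 2 - t ^ (d - 1) / uh ^ (d - 1)))
        (-(2 * u - ((d : ℝ) - 1) * u ^ (d - 2) / uh ^ (d - 1))
          / (1 + u ^ 2 - u ^ (d - 1) / uh ^ (d - 1)) ^ 2) u := by
      have := hhd.inv hh0ne; simp only [one_div]; exact this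
    have hSd : HasDerivAt (fun t => t ^ 2 * (deriv μ t) ^ 2
        + 1 / (1 + t ^ 2 - t ^ (d - 1) / uh ^ (d - 1)))
        (↑2 * u ^ 1 * (deriv μ u) ^ 2 + u ^ 2 * (↑2 * (deriv μ u) ^ 1 * deriv (deriv μ) u)
          + -(2 * u - ((d : ℝ) - 1) * u ^ (d - 2) / uh ^ (d - 1))
            / (1 + u ^ 2 - u ^ (d - 1) / uh ^ (d - 1)) ^ 2) u :=
      ((hasDerivAt_pow 2 u).mul (hq2d.pow 2)).add hinv
    have hgd : HasDerivAt (fun t => Real.sqrt (t ^ 2 * (deriv μ t) ^ 2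
        + 1 / (1 + t ^ 2 - t ^ (d - 1) / uh ^ (d - 1))))
        ((↑2 * u ^ 1 * (deriv μ u) ^ 2 + u ^ 2 * (↑2 * (deriv μ u) ^ 1 * deriv (deriv μ) u)
          + -(2 * u - ((d : ℝ) - 1) * u ^ (d - 2) / uh ^ (d - 1))
            / (1 + u ^ 2 - u ^ (d - 1) / uh ^ (d - 1)) ^ 2)
          / (2 * Real.sqrt (u ^ 2 * (deriv μ u) ^ 2
              + 1 / (1 + u ^ 2 - u ^ (d - 1) / uh ^ (d - 1))))) u :=
      hSd.sqrt (ne_of_gt hSpos)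
    have hKd : HasDerivAt (fun t => (t * Real.sin (μ t)) ^ (d - 1))
        (↑(d - 1) * (u * Real.sin (μ u)) ^ (d - 1 - 1)
          * (1 * Real.sin (μ u) + u * (Real.cos (μ u) * deriv μ u))) u :=
      ((hasDerivAt_id u).mul (hμd.sin)).pow (d - 1)
    have hden2 : 2 * Real.sqrt (u ^ 2 * (deriv μ u) ^ 2
        + 1 / (1 + u ^ 2 - u ^ (d - 1) / uh ^ (d - 1))) ≠ 0 := by positivity
    have hquot := hNd.div (hgd.const_mul 2) (by simpa using hden2)
    have hFd := hquot.div hKd hKne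
    have eF : deriv (fun t => deriv (fun q => areaLagrangianMu d uh t (μ t) q) (deriv μ t)) u
        = ((2 * u * deriv μ u + u ^ 2 * deriv (deriv μ) u)
            * (Real.sqrt (u ^ 2 * (deriv μ u) ^ 2
                + 1 / (1 + u ^ 2 - u ^ (d - 1) / uh ^ (d - 1)))
              * (u * Real.sin (μ u) * (u * Real.sin (μ u)) ^ (d - 2)))
          - u ^ 2 * deriv μ u *
            ((2 * u * (deriv μ u) ^ 2 + u ^ 2 * (2 * deriv μ u * deriv (deriv μ) u)
                - (2 * u - ((d : ℝ) - 1) * u ^ (d - 2) / uh ^ (d - 1))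
                  / (1 + u ^ 2 - u ^ (d - 1) / uh ^ (d - 1)) ^ 2)
              / (2 * Real.sqrt (u ^ 2 * (deriv μ u) ^ 2
                  + 1 / (1 + u ^ 2 - u ^ (d - 1) / uh ^ (d - 1))))
              * (u * Real.sin (μ u) * (u * Real.sin (μ u)) ^ (d - 2))
              + Real.sqrt (u ^ 2 * (deriv μ u) ^ 2
                  + 1 / (1 + u ^ 2 - u ^ (d - 1) / uh ^ (d - 1)))
                * (((d : ℝ) - 1) * (u * Real.sin (μ u)) ^ (d - 2)
                  * (Real.sin (μ u) + u * Real.cos (μ u) * deriv μ u))))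
          / (Real.sqrt (u ^ 2 * (deriv μ u) ^ 2
              + 1 / (1 + u ^ 2 - u ^ (d - 1) / uh ^ (d - 1)))
            * (u * Real.sin (μ u) * (u * Real.sin (μ u)) ^ (d - 2))) ^ 2 := by
      rw [hEq.deriv_eq, HasDerivAt.deriv (f := fun t => t ^ 2 * (2 * deriv μ t) / (2 * Real.sqrt (t ^ 2 * (deriv μ t) ^ 2 + 1 / (1 + t ^ 2 - t ^ (d - 1) / uh ^ (d - 1)))) / (t * Real.sin (μ t)) ^ (d - 1)) hFd, e1, e2, hpowus]
      simp only [Pi.div_apply]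
      have huhne : uh ^ (d - 1) ≠ 0 := pow_ne_zero _ (ne_of_gt huh)
      generalize hH : (1 + u ^ 2 - u ^ (d - 1) / uh ^ (d - 1)) = H at hh0ne hgne ⊢
      generalize hG : Real.sqrt (u ^ 2 * deriv μ u ^ 2 + 1 / H) = G at hgne ⊢
      generalize hP : (u * Real.sin (μ u)) ^ (d - 2) = P at hpne ⊢
      field_simp
      ring
    rw [eF, eM, hhd.deriv, Real.cot_eq_cos_div_sin]
    exact alg_key' ((d : ℝ)) u (deriv μ u) (deriv (deriv μ) u)
      (1 + u ^ 2 - u ^ (d - 1) / uh ^ (d - 1))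
      (2 * u - ((d : ℝ) - 1) * u ^ (d - 2) / uh ^ (d - 1))
      (Real.sin (μ u)) (Real.cos (μ u))
      (Real.sqrt (u ^ 2 * (deriv μ u) ^ 2
        + 1 / (1 + u ^ 2 - u ^ (d - 1) / uh ^ (d - 1))))
      ((u * Real.sin (μ u)) ^ (d - 2))
      hu0 hsne hpne hgne hh0ne hg2
  constructor
  · intro H u hu; exact (key u hu).mp (H u hu)
  · intro H u hu; exact (key u hu).mpr (H u hu)
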